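/- arXiv:2307.01765 — 4 statements merged into one kernel-verified Lean document; each statement's English description precedes it below -/
import Mathlib

section
/- Let (X,d) be a proper metric space, N ≥ 2, λ ∈ Δ_N, and ν = (ν₁,…,ν_N) ∈ 𝒫₁(X)^N. Set C := max over ρ ∈ Med_λ(ν) and i ∈ {1,…,N} of W₁(ρ,νᵢ), and δ := max{∑_{j∈J} λⱼ : J ⊆ {1,…,N}, ∑_{j∈J} λⱼ < 1/2}. Let I ⊆ {1,…,N} with ∑_{i∈I} λᵢ < 1/2, and let μ = (μ₁,…,μ_N) ∈ 𝒫₁(X)^N be a corrupted collection, i.e. μⱼ = νⱼ for all j ∉ I. Then for every ν* ∈ Med_λ(ν) and every μ* ∈ Med_λ(μ) one has W₁(ν*, μ*) ≤ 2Cδ/(1 − 2δ) + 2C. -/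
set_option linter.unusedSectionVars false
set_option maxHeartbeats 1000000

open ProbabilityTheory Set


open MeasureTheory Filter Topology
open scoped ENNReal NNReal

/-- The set of couplings (transport plans): Borel probability measures on `X × X`
with first marginal `μ` and second marginal `ν`. -/
def Couplings {X : Type*} [MeasurableSpace X] (μ ν : Measure X) :
    Set (Measure (X × X)) :=
  {γ | IsProbabilityMeasure γ ∧ γ.map Prod.fst = μ ∧ γ.map Prod.snd = ν}

/-- The Wasserstein distance of order `1` between two measures on a metric space:
the infimum over couplings `γ` of `∫ d(x,y) dγ`. -/
noncomputable def W1 {X : Type*} [MetricSpace X] [MeasurableSpace X]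
    (μ ν : Measure X) : ℝ :=
  (⨅ γ ∈ Couplings μ ν, ∫⁻ p, edist p.1 p.2 ∂γ).toReal

/-- `𝒫₁(X)`: Borel probability measures on `X` with finite first moment. -/
def P1 (X : Type*) [MetricSpace X] [MeasurableSpace X] : Set (Measure X) :=
  {μ | IsProbabilityMeasure μ ∧ ∀ x₀ : X, Integrable (fun x => dist x₀ x) μ}

/-- `λ` belongs to the simplex `Δ_N`: nonnegative weights summing to `1`. -/
def memSimplex {N : ℕ} (l : Fin N → ℝ) : Prop :=
  (∀ i, 0 ≤ l i) ∧ ∑ i, l i = 1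

/-- The dispersion functional `μ ↦ ∑ᵢ λᵢ W₁(νᵢ, μ)`. -/
noncomputable def medCost {X : Type*} [MetricSpace X] [MeasurableSpace X] {N : ℕ}
    (l : Fin N → ℝ) (ν : Fin N → Measure X) (μ : Measure X) : ℝ :=
  ∑ i, l i * W1 (ν i) μ

/-- The set of Wasserstein medians of `ν₁, …, ν_N` with weights `λ`:
minimizers over `𝒫₁(X)` of the dispersion functional. -/
def Med {X : Type*} [MetricSpace X] [MeasurableSpace X] {N : ℕ}
    (l : Fin N → ℝ) (ν : Fin N → Measure X) : Set (Measure X) :=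
  {μ | μ ∈ P1 X ∧ ∀ ρ ∈ P1 X, medCost l ν μ ≤ medCost l ν ρ}


section AuxW1

noncomputable def W1e {X : Type*} [MetricSpace X] [MeasurableSpace X]
    (μ ν : Measure X) : ℝ≥0∞ :=
  ⨅ γ ∈ Couplings μ ν, ∫⁻ p, edist p.1 p.2 ∂γ

lemma W1_eq_toReal {X : Type*} [MetricSpace X] [MeasurableSpace X] (μ ν : Measure X) :
    W1 μ ν = (W1e μ ν).toReal := rfl

section Lemmas
variable {X : Type*} [MetricSpace X] [MeasurableSpace X] [BorelSpace X]
  [SecondCountableTopology X]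

lemma measurable_edist_pair : Measurable (fun p : X × X => edist p.1 p.2) :=
  measurable_fst.edist measurable_snd

lemma prod_mem_couplings (μ ν : Measure X) [IsProbabilityMeasure μ]
    [IsProbabilityMeasure ν] : μ.prod ν ∈ Couplings μ ν := by
  refine ⟨inferInstance, ?_, ?_⟩
  · rw [← Measure.fst]; exact Measure.fst_prod
  · rw [← Measure.snd]; exact Measure.snd_prod

lemma lintegral_fst_coupling {μ ν : Measure X} {γ : Measure (X × X)}
    (h : γ ∈ Couplings μ ν) {f : X → ℝ≥0∞} (hf : Measurable f) :
    ∫⁻ p, f p.1 ∂γ = ∫⁻ x, f x ∂μ := by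
  rw [← h.2.1, lintegral_map hf measurable_fst]

lemma lintegral_snd_coupling {μ ν : Measure X} {γ : Measure (X × X)}
    (h : γ ∈ Couplings μ ν) {f : X → ℝ≥0∞} (hf : Measurable f) :
    ∫⁻ p, f p.2 ∂γ = ∫⁻ x, f x ∂ν := by
  rw [← h.2.2, lintegral_map hf measurable_snd]

lemma lintegral_edist_lt_top {μ : Measure X} (h : μ ∈ P1 X) (x₀ : X) :
    ∫⁻ x, edist x₀ x ∂μ < ⊤ := by
  have h2 := (h.2 x₀).hasFiniteIntegral
  rw [HasFiniteIntegral] at h2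
  refine lt_of_eq_of_lt ?_ h2
  refine lintegral_congr fun x => ?_
  rw [edist_dist, ← Real.enorm_eq_ofReal dist_nonneg]

/-- Cost of any coupling of `P1` measures is finite. -/
lemma cost_lt_top {μ ν : Measure X} (hμ : μ ∈ P1 X) (hν : ν ∈ P1 X)
    {γ : Measure (X × X)} (hγ : γ ∈ Couplings μ ν) (x₀ : X) :
    ∫⁻ p, edist p.1 p.2 ∂γ < ⊤ := by
  have hb : ∫⁻ p, edist p.1 p.2 ∂γ ≤
      ∫⁻ p : X × X, (edist x₀ p.1 + edist x₀ p.2) ∂γ := by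
    refine lintegral_mono fun p => ?_
    calc edist p.1 p.2 ≤ edist p.1 x₀ + edist x₀ p.2 := edist_triangle _ _ _
    _ = edist x₀ p.1 + edist x₀ p.2 := by rw [edist_comm]
  refine lt_of_le_of_lt hb ?_
  have hm : Measurable fun x : X => edist x₀ x := measurable_const.edist measurable_id
  rw [lintegral_add_left (measurable_const.edist measurable_fst)]
  rw [lintegral_fst_coupling hγ hm, lintegral_snd_coupling hγ hm]
  exact ENNReal.add_lt_top.2 ⟨lintegral_edist_lt_top hμ x₀, lintegral_edist_lt_top hν x₀⟩

lemma W1e_lt_top {μ ν : Measure X} (hμ : μ ∈ P1 X) (hν : ν ∈ P1 X) [Nonempty X] :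
    W1e μ ν < ⊤ := by
  haveI := hμ.1; haveI := hν.1
  have hc := prod_mem_couplings μ ν
  refine lt_of_le_of_lt (iInf₂_le _ hc) ?_
  exact cost_lt_top hμ hν hc (Classical.arbitrary X)

lemma mem_couplings_swap {μ ν : Measure X} {γ : Measure (X × X)}
    (h : γ ∈ Couplings μ ν) : γ.map Prod.swap ∈ Couplings ν μ := by
  obtain ⟨hp, h1, h2⟩ := h
  haveI := hp
  refine ⟨Measure.isProbabilityMeasure_map measurable_swap.aemeasurable, ?_, ?_⟩
  · rw [Measure.map_map measurable_fst measurable_swap]; exact h2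
  · rw [Measure.map_map measurable_snd measurable_swap]; exact h1

lemma W1e_symm (μ ν : Measure X) : W1e μ ν = W1e ν μ := by
  have key : ∀ (α β : Measure X), W1e β α ≤ W1e α β := by
    intro α β
    refine le_iInf₂ fun γ hγ => ?_
    haveI := hγ.1
    refine le_trans (iInf₂_le _ (mem_couplings_swap hγ)) ?_
    rw [lintegral_map measurable_edist_pair measurable_swap]
    exact le_of_eq (lintegral_congr fun p => edist_comm _ _)
  exact le_antisymm (key ν μ) (key μ ν)

end Lemmas

section Triangle
variable {X : Type*} [MetricSpace X] [MeasurableSpace X] [BorelSpace X]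
  [SecondCountableTopology X] [CompleteSpace X] [Nonempty X]

lemma glue_exists {μ ν ρ : Measure X} {γ₁ γ₂ : Measure (X × X)}
    (h₁ : γ₁ ∈ Couplings μ ν) (h₂ : γ₂ ∈ Couplings ν ρ) :
    ∃ γ ∈ Couplings μ ρ,
      ∫⁻ p, edist p.1 p.2 ∂γ ≤ ∫⁻ p, edist p.1 p.2 ∂γ₁ + ∫⁻ p, edist p.1 p.2 ∂γ₂ := by
  haveI := h₁.1; haveI := h₂.1
  set η : Measure (X × X) := γ₁.map Prod.swap with hη
  haveI : IsProbabilityMeasure η := Measure.isProbabilityMeasure_map measurable_swap.aemeasurable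
  have hηfst : η.fst = ν := by
    rw [Measure.fst, hη, Measure.map_map measurable_fst measurable_swap]
    exact h₁.2.2
  have hγ₂fst : γ₂.fst = ν := h₂.2.1
  set κ₁ := η.condKernel with hκ₁
  set κ₂ := γ₂.condKernel with hκ₂
  have hd₁ : ν ⊗ₘ κ₁ = η := by rw [← hηfst]; exact η.disintegrate κ₁
  have hd₂ : ν ⊗ₘ κ₂ = γ₂ := by rw [← hγ₂fst]; exact γ₂.disintegrate κ₂
  haveI : IsProbabilityMeasure ν := by
    constructor; rw [← hγ₂fst, Measure.fst_univ]; exact measure_univ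
  set θ : Measure (X × (X × X)) := ν ⊗ₘ (κ₁ ×ₖ κ₂) with hθ
  haveI : IsProbabilityMeasure θ := by rw [hθ]; infer_instance
  set γ : Measure (X × X) := θ.map Prod.snd with hγdef
  haveI hγprob : IsProbabilityMeasure γ :=
    Measure.isProbabilityMeasure_map measurable_snd.aemeasurable
  -- first marginal
  have hmfst : γ.map Prod.fst = μ := by
    rw [hγdef, Measure.map_map measurable_fst measurable_snd]
    ext s hs
    rw [Measure.map_apply (measurable_fst.comp measurable_snd) hs, hθ,
      Measure.compProd_apply ((measurable_fst.comp measurable_snd) hs)]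
    have hker : ∀ y : X, (κ₁ ×ₖ κ₂) y (Prod.mk y ⁻¹' ((Prod.fst ∘ Prod.snd) ⁻¹' s))
        = κ₁ y s := by
      intro y
      have hset : (Prod.mk y ⁻¹' ((Prod.fst ∘ Prod.snd) ⁻¹' s) : Set (X × X))
          = s ×ˢ (univ : Set X) := by
        ext p; simp
      rw [hset, Kernel.prod_apply, Measure.prod_prod, measure_univ, mul_one]
    simp_rw [hker]
    have hint : ∫⁻ y, κ₁ y s ∂ν = (ν ⊗ₘ κ₁) (Prod.snd ⁻¹' s) := by
      rw [Measure.compProd_apply (measurable_snd hs)]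
      exact lintegral_congr fun y => rfl
    rw [hint, hd₁, hη, Measure.map_apply measurable_swap (measurable_snd hs)]
    rw [show Prod.swap ⁻¹' (Prod.snd ⁻¹' s) = Prod.fst ⁻¹' s from rfl,
      ← Measure.map_apply measurable_fst hs, h₁.2.1]
  -- second marginal
  have hmsnd : γ.map Prod.snd = ρ := by
    rw [hγdef, Measure.map_map measurable_snd measurable_snd]
    ext s hs
    rw [Measure.map_apply (measurable_snd.comp measurable_snd) hs, hθ,
      Measure.compProd_apply ((measurable_snd.comp measurable_snd) hs)]
    have hker : ∀ y : X, (κ₁ ×ₖ κ₂) y (Prod.mk y ⁻¹' ((Prod.snd ∘ Prod.snd) ⁻¹' s))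
        = κ₂ y s := by
      intro y
      have hset : (Prod.mk y ⁻¹' ((Prod.snd ∘ Prod.snd) ⁻¹' s) : Set (X × X))
          = (univ : Set X) ×ˢ s := by
        ext p; simp
      rw [hset, Kernel.prod_apply, Measure.prod_prod, measure_univ, one_mul]
    simp_rw [hker]
    have hint : ∫⁻ y, κ₂ y s ∂ν = (ν ⊗ₘ κ₂) (Prod.snd ⁻¹' s) := by
      rw [Measure.compProd_apply (measurable_snd hs)]
      exact lintegral_congr fun y => rfl
    rw [hint, hd₂, ← Measure.map_apply measurable_snd hs, h₂.2.2]
  refine ⟨γ, ⟨hγprob, hmfst, hmsnd⟩, ?_⟩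
  -- cost estimate
  have hmeas1 : Measurable fun q : X × (X × X) => edist q.2.1 q.1 :=
    (measurable_fst.comp measurable_snd).edist measurable_fst
  have hmeas2 : Measurable fun q : X × (X × X) => edist q.1 q.2.2 :=
    measurable_fst.edist (measurable_snd.comp measurable_snd)
  have hcost1 : ∫⁻ q, edist q.2.1 q.1 ∂θ = ∫⁻ p, edist p.1 p.2 ∂γ₁ := by
    rw [hθ, Measure.lintegral_compProd hmeas1]
    have : ∀ y : X, ∫⁻ p : X × X, edist p.1 y ∂((κ₁ ×ₖ κ₂) y)
        = ∫⁻ x, edist x y ∂(κ₁ y) := by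
      intro y
      rw [Kernel.prod_apply,
        lintegral_prod _ ((measurable_fst.edist measurable_const).aemeasurable)]
      simp
    simp_rw [this]
    rw [show (∫⁻ y, ∫⁻ x, edist x y ∂(κ₁ y) ∂ν)
        = ∫⁻ p : X × X, edist p.2 p.1 ∂(ν ⊗ₘ κ₁) from
      (Measure.lintegral_compProd (measurable_snd.edist measurable_fst)).symm]
    rw [hd₁, hη, lintegral_map (measurable_snd.edist measurable_fst) measurable_swap]
    exact lintegral_congr fun p => rfl
  have hcost2 : ∫⁻ q, edist q.1 q.2.2 ∂θ = ∫⁻ p, edist p.1 p.2 ∂γ₂ := by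
    rw [hθ, Measure.lintegral_compProd hmeas2]
    have : ∀ y : X, ∫⁻ p : X × X, edist y p.2 ∂((κ₁ ×ₖ κ₂) y)
        = ∫⁻ z, edist y z ∂(κ₂ y) := by
      intro y
      rw [Kernel.prod_apply,
        lintegral_prod _ ((measurable_const.edist measurable_snd).aemeasurable)]
      simp
    simp_rw [this]
    rw [show (∫⁻ y, ∫⁻ z, edist y z ∂(κ₂ y) ∂ν)
        = ∫⁻ p : X × X, edist p.1 p.2 ∂(ν ⊗ₘ κ₂) from
      (Measure.lintegral_compProd measurable_edist_pair).symm]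
    rw [hd₂]
  calc ∫⁻ p, edist p.1 p.2 ∂γ = ∫⁻ q : X × (X × X), edist q.2.1 q.2.2 ∂θ := by
        rw [hγdef, lintegral_map measurable_edist_pair measurable_snd]
    _ ≤ ∫⁻ q : X × (X × X), (edist q.2.1 q.1 + edist q.1 q.2.2) ∂θ :=
        lintegral_mono fun q => edist_triangle _ _ _
    _ = ∫⁻ q, edist q.2.1 q.1 ∂θ + ∫⁻ q, edist q.1 q.2.2 ∂θ :=
        lintegral_add_left hmeas1 _
    _ = ∫⁻ p, edist p.1 p.2 ∂γ₁ + ∫⁻ p, edist p.1 p.2 ∂γ₂ := by rw [hcost1, hcost2]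

lemma W1e_triangle (μ ν ρ : Measure X) :
    W1e μ ρ ≤ W1e μ ν + W1e ν ρ := by
  have key : ∀ γ₁ ∈ Couplings μ ν, ∀ γ₂ ∈ Couplings ν ρ,
      W1e μ ρ ≤ (∫⁻ p, edist p.1 p.2 ∂γ₁) + ∫⁻ p, edist p.1 p.2 ∂γ₂ := by
    intro γ₁ h₁ γ₂ h₂
    obtain ⟨γ, hγ, hle⟩ := glue_exists h₁ h₂
    exact le_trans (iInf₂_le γ hγ) hle
  have hre : W1e μ ν + W1e ν ρ = ⨅ γ₁ : ↥(Couplings μ ν), ⨅ γ₂ : ↥(Couplings ν ρ),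
      ((∫⁻ p, edist p.1 p.2 ∂(γ₁ : Measure (X × X)))
        + ∫⁻ p, edist p.1 p.2 ∂(γ₂ : Measure (X × X))) := by
    rw [W1e, W1e, iInf_subtype', iInf_subtype', ENNReal.iInf_add]
    simp_rw [ENNReal.add_iInf]
  rw [hre]
  exact le_iInf fun γ₁ => le_iInf fun γ₂ => key _ γ₁.2 _ γ₂.2

end Triangle

section RealLemmas
variable {X : Type*} [MetricSpace X] [MeasurableSpace X] [BorelSpace X]
  [SecondCountableTopology X]

lemma W1_nonneg (μ ν : Measure X) : 0 ≤ W1 μ ν := ENNReal.toReal_nonneg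

lemma W1_symm (μ ν : Measure X) : W1 μ ν = W1 ν μ := by
  rw [W1_eq_toReal, W1_eq_toReal, W1e_symm]

variable [CompleteSpace X] [Nonempty X]

lemma W1_triangle {μ ν ρ : Measure X} (hμ : μ ∈ P1 X) (hν : ν ∈ P1 X) (hρ : ρ ∈ P1 X) :
    W1 μ ρ ≤ W1 μ ν + W1 ν ρ := by
  rw [W1_eq_toReal, W1_eq_toReal, W1_eq_toReal,
    ← ENNReal.toReal_add (W1e_lt_top hμ hν).ne (W1e_lt_top hν hρ).ne]
  exact ENNReal.toReal_mono
    (ENNReal.add_lt_top.2 ⟨W1e_lt_top hμ hν, W1e_lt_top hν hρ⟩).ne (W1e_triangle μ ν ρ)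

end RealLemmas


end AuxW1

/-- Quantitative robustness of Wasserstein medians: if fewer than half
of the weights are corrupted (`∑_{i ∈ I} λᵢ < 1/2` and `μⱼ = νⱼ` for `j ∉ I`), then any
median `μ*` of the corrupted collection satisfies
`W₁(ν*, μ*) ≤ 2Cδ/(1 − 2δ) + 2C` for every median `ν*` of the original collection, where
`C = max_{ρ ∈ Med_λ(ν), i} W₁(ρ, νᵢ)` and
`δ = max{∑_{j∈J} λⱼ : J ⊆ {1,…,N}, ∑_{j∈J} λⱼ < 1/2}`. -/
theorem median_breakdown_bound
    {X : Type*} [MetricSpace X] [ProperSpace X] [MeasurableSpace X] [BorelSpace X]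
    {N : ℕ} (hN : 2 ≤ N) {l : Fin N → ℝ} (hl : memSimplex l)
    {ν : Fin N → Measure X} (hν : ∀ i, ν i ∈ P1 X)
    (I : Finset (Fin N)) (hI : ∑ i ∈ I, l i < 1 / 2)
    {μ : Fin N → Measure X} (hμ : ∀ i, μ i ∈ P1 X)
    (hcorr : ∀ j, j ∉ I → μ j = ν j) :
    ∀ νstar ∈ Med l ν, ∀ μstar ∈ Med l μ,
      W1 νstar μstar ≤
        2 * sSup {c : ℝ | ∃ ρ ∈ Med l ν, ∃ i : Fin N, c = W1 ρ (ν i)} *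
            sSup {s : ℝ | ∃ J : Finset (Fin N), (∑ j ∈ J, l j) < 1 / 2 ∧ s = ∑ j ∈ J, l j} /
          (1 - 2 * sSup {s : ℝ | ∃ J : Finset (Fin N),
              (∑ j ∈ J, l j) < 1 / 2 ∧ s = ∑ j ∈ J, l j}) +
        2 * sSup {c : ℝ | ∃ ρ ∈ Med l ν, ∃ i : Fin N, c = W1 ρ (ν i)} := by
  intro νstar hνs μstar hμs
  by_cases hX : Nonempty X
  swap
  · -- no points: no probability measures, contradiction
    haveI : IsEmpty X := not_nonempty_iff.mp hX
    have h1 : νstar Set.univ = 1 := hνs.1.1.measure_univ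
    rw [Set.univ_eq_empty_iff.mpr ‹IsEmpty X›] at h1
    simp at h1
  haveI : Nonempty X := hX
  set Cv := sSup {c : ℝ | ∃ ρ ∈ Med l ν, ∃ i : Fin N, c = W1 ρ (ν i)} with hCvdef
  set δ := sSup {s : ℝ | ∃ J : Finset (Fin N),
      (∑ j ∈ J, l j) < 1 / 2 ∧ s = ∑ j ∈ J, l j} with hδdef
  have hNpos : 0 < N := lt_of_lt_of_le two_pos hN
  have i0 : Fin N := ⟨0, hNpos⟩
  have hνsP : νstar ∈ P1 X := hνs.1
  have hμsP : μstar ∈ P1 X := hμs.1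
  -- a positive weight exists
  obtain ⟨j₀, hj₀⟩ : ∃ j₀, 0 < l j₀ := by
    by_contra h
    push_neg at h
    have : ∑ i, l i = 0 := Finset.sum_eq_zero fun i _ => le_antisymm (h i) (hl.1 i)
    rw [hl.2] at this; norm_num at this
  -- the C-set is bounded above
  have hBdd : BddAbove {c : ℝ | ∃ ρ ∈ Med l ν, ∃ i : Fin N, c = W1 ρ (ν i)} := by
    refine ⟨medCost l ν (ν j₀) / l j₀ +
      Finset.univ.sup' ⟨j₀, Finset.mem_univ j₀⟩ (fun i => W1 (ν j₀) (ν i)), ?_⟩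
    rintro c ⟨ρ, hρ, i, rfl⟩
    have hρP : ρ ∈ P1 X := hρ.1
    have h1 : l j₀ * W1 (ν j₀) ρ ≤ medCost l ν ρ :=
      Finset.single_le_sum (fun i _ => mul_nonneg (hl.1 i) (W1_nonneg _ _))
        (Finset.mem_univ j₀)
    have h2 : medCost l ν ρ ≤ medCost l ν (ν j₀) := hρ.2 (ν j₀) (hν j₀)
    have h3 : W1 ρ (ν i) ≤ W1 ρ (ν j₀) + W1 (ν j₀) (ν i) :=
      W1_triangle hρP (hν j₀) (hν i)
    have h4 : W1 ρ (ν j₀) = W1 (ν j₀) ρ := W1_symm _ _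
    have h5 : W1 (ν j₀) ρ ≤ medCost l ν (ν j₀) / l j₀ := by
      rw [le_div_iff₀ hj₀]; nlinarith
    have h6 : W1 (ν j₀) (ν i) ≤
        Finset.univ.sup' ⟨j₀, Finset.mem_univ j₀⟩ (fun i => W1 (ν j₀) (ν i)) :=
      Finset.le_sup' (fun i => W1 (ν j₀) (ν i)) (Finset.mem_univ i)
    linarith
  have hCge : ∀ ρ ∈ Med l ν, ∀ i : Fin N, W1 ρ (ν i) ≤ Cv :=
    fun ρ hρ i => le_csSup hBdd ⟨ρ, hρ, i, rfl⟩
  have hC0 : 0 ≤ Cv := le_trans (W1_nonneg νstar (ν i0)) (hCge νstar hνs i0)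
  -- facts about δ
  have hSfin : {s : ℝ | ∃ J : Finset (Fin N),
      (∑ j ∈ J, l j) < 1 / 2 ∧ s = ∑ j ∈ J, l j}.Finite := by
    refine Set.Finite.subset (Set.finite_range (fun J : Finset (Fin N) => ∑ j ∈ J, l j)) ?_
    rintro s ⟨J, _, rfl⟩; exact ⟨J, rfl⟩
  have hS0 : (0 : ℝ) ∈ {s : ℝ | ∃ J : Finset (Fin N),
      (∑ j ∈ J, l j) < 1 / 2 ∧ s = ∑ j ∈ J, l j} := ⟨∅, by norm_num, by simp⟩
  have hSbdd := hSfin.bddAbove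
  have hδmem : δ ∈ {s : ℝ | ∃ J : Finset (Fin N),
      (∑ j ∈ J, l j) < 1 / 2 ∧ s = ∑ j ∈ J, l j} :=
    Set.Nonempty.csSup_mem ⟨0, hS0⟩ hSfin
  obtain ⟨J₀, hJ₀lt, hJ₀eq⟩ := hδmem
  have hδhalf : δ < 1 / 2 := by rw [hJ₀eq]; exact hJ₀lt
  have hδI : ∑ i ∈ I, l i ≤ δ := le_csSup hSbdd ⟨I, hI, rfl⟩
  have hδ0 : 0 ≤ δ := le_csSup hSbdd hS0
  set sI := ∑ i ∈ I, l i with hsIdef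
  have hsI0 : 0 ≤ sI := Finset.sum_nonneg fun i _ => hl.1 i
  have hcompl : ∑ j ∈ Iᶜ, l j = 1 - sI := by
    have := Finset.sum_add_sum_compl I l
    rw [hl.2] at this; linarith
  set a := W1 νstar μstar with hadef
  have ha0 : 0 ≤ a := W1_nonneg _ _
  -- optimality of μstar
  have hopt : medCost l μ μstar ≤ medCost l μ νstar := hμs.2 νstar hνsP
  set A := ∑ j ∈ I, l j * W1 (μ j) μstar with hAdef
  -- lower bound for the cost of μstar
  have lhs_le : A + (1 - sI) * (a - Cv) ≤ medCost l μ μstar := by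
    have hsplit : medCost l μ μstar = A + ∑ j ∈ Iᶜ, l j * W1 (ν j) μstar := by
      rw [medCost, ← Finset.sum_add_sum_compl I (fun j => l j * W1 (μ j) μstar)]
      congr 1
      refine Finset.sum_congr rfl fun j hj => ?_
      rw [hcorr j (Finset.mem_compl.mp hj)]
    rw [hsplit, ← hcompl, Finset.sum_mul]
    have : ∀ j ∈ Iᶜ, l j * (a - Cv) ≤ l j * W1 (ν j) μstar := by
      intro j _
      have ht : a ≤ W1 νstar (ν j) + W1 (ν j) μstar := W1_triangle hνsP (hν j) hμsP
      have hc : W1 νstar (ν j) ≤ Cv := hCge νstar hνs j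
      exact mul_le_mul_of_nonneg_left (by linarith) (hl.1 j)
    exact add_le_add (le_refl A) (Finset.sum_le_sum this)
  -- upper bound for the cost of νstar
  have rhs_ge : medCost l μ νstar ≤ A + sI * a + (1 - sI) * Cv := by
    have hsplit : medCost l μ νstar
        = ∑ j ∈ I, l j * W1 (μ j) νstar + ∑ j ∈ Iᶜ, l j * W1 (ν j) νstar := by
      rw [medCost, ← Finset.sum_add_sum_compl I (fun j => l j * W1 (μ j) νstar)]
      congr 1
      refine Finset.sum_congr rfl fun j hj => ?_
      rw [hcorr j (Finset.mem_compl.mp hj)]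
    rw [hsplit]
    have hIbound : ∑ j ∈ I, l j * W1 (μ j) νstar ≤ A + sI * a := by
      have : ∀ j ∈ I, l j * W1 (μ j) νstar ≤ l j * (W1 (μ j) μstar + a) := by
        intro j _
        have ht : W1 (μ j) νstar ≤ W1 (μ j) μstar + W1 μstar νstar :=
          W1_triangle (hμ j) hμsP hνsP
        have hs : W1 μstar νstar = a := by rw [hadef, W1_symm]
        exact mul_le_mul_of_nonneg_left (by linarith) (hl.1 j)
      have h := Finset.sum_le_sum this
      have : ∑ j ∈ I, l j * (W1 (μ j) μstar + a) = A + sI * a := by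
        rw [hAdef, hsIdef, Finset.sum_mul, ← Finset.sum_add_distrib]
        exact Finset.sum_congr rfl fun j _ => by ring
      linarith
    have hIcbound : ∑ j ∈ Iᶜ, l j * W1 (ν j) νstar ≤ (1 - sI) * Cv := by
      have : ∀ j ∈ Iᶜ, l j * W1 (ν j) νstar ≤ l j * Cv := by
        intro j _
        have : W1 (ν j) νstar ≤ Cv := by rw [W1_symm]; exact hCge νstar hνs j
        exact mul_le_mul_of_nonneg_left this (hl.1 j)
      have h := Finset.sum_le_sum this
      rw [← Finset.sum_mul, hcompl] at h
      exact h
    linarith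
  -- combine
  have hkey : (1 - 2 * sI) * a ≤ 2 * (1 - sI) * Cv := by nlinarith
  have h2δ : 0 < 1 - 2 * δ := by linarith
  have h2sI : 0 < 1 - 2 * sI := by linarith
  have key2 : a * (1 - 2 * δ) ≤ 2 * Cv * (1 - δ) := by
    nlinarith [mul_le_mul_of_nonneg_right hkey (le_of_lt h2δ),
      mul_nonneg hC0 (sub_nonneg.2 hδI)]
  have hfin : a ≤ 2 * Cv * (1 - δ) / (1 - 2 * δ) := (le_div_iff₀ h2δ).2 key2
  have heq : 2 * Cv * δ / (1 - 2 * δ) + 2 * Cv = 2 * Cv * (1 - δ) / (1 - 2 * δ) := by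
    field_simp; ring
  rw [heq]
  exact hfin
end

section
/- Let N ≥ 1 and λ ∈ Δ_N. For every x = (x₁,…,x_N) ∈ ℝ^N there exists ε > 0 such that for all y = (y₁,…,y_N) ∈ ℝ^N with ‖x − y‖_∞ ≤ ε one has m^±_λ(x) + min_{i ∈ I_±(x)}(yᵢ − xᵢ) ≤ m^±_λ(y) ≤ m^±_λ(x) + max_{i ∈ I_±(x)}(yᵢ − xᵢ), where I_±(x) := {i ∈ {1,…,N} : m^±_λ(x) = xᵢ} (which is nonempty), and m^± stands for either the lower median m⁻_λ or the upper median m⁺_λ. -/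
/-- The total weight of the indices `i` with `xᵢ ≤ y`. -/
noncomputable def sumWeightLe {N : ℕ} (l x : Fin N → ℝ) (y : ℝ) : ℝ :=
  ∑ i ∈ Finset.univ.filter (fun i => x i ≤ y), l i

/-- The total weight of the indices `i` with `xᵢ < y`. -/
noncomputable def sumWeightLt {N : ℕ} (l x : Fin N → ℝ) (y : ℝ) : ℝ :=
  ∑ i ∈ Finset.univ.filter (fun i => x i < y), l i

/-- The lower weighted median `m⁻_λ(x) = inf {y : ∑_{i : xᵢ ≤ y} λᵢ ≥ 1/2}`. -/
noncomputable def mMinus {N : ℕ} (l x : Fin N → ℝ) : ℝ :=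
  sInf {y : ℝ | 1 / 2 ≤ sumWeightLe l x y}

/-- The upper weighted median `m⁺_λ(x) = sup {y : ∑_{i : xᵢ < y} λᵢ ≤ 1/2}`. -/
noncomputable def mPlus {N : ℕ} (l x : Fin N → ℝ) : ℝ :=
  sSup {y : ℝ | sumWeightLt l x y ≤ 1 / 2}

open Finset

section Aux

variable {N : ℕ}

lemma sumW_mono {l : Fin N → ℝ} (hl : ∀ i, 0 ≤ l i)
    {p q : Fin N → Prop} [DecidablePred p] [DecidablePred q] (h : ∀ i, p i → q i) :
    ∑ i ∈ univ.filter p, l i ≤ ∑ i ∈ univ.filter q, l i := by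
  apply Finset.sum_le_sum_of_subset_of_nonneg
  · intro i hi
    simp only [mem_filter, mem_univ, true_and] at *
    exact h i hi
  · exact fun i _ _ => hl i

lemma sumW_congr (l : Fin N → ℝ) {p q : Fin N → Prop} [DecidablePred p] [DecidablePred q]
    (h : ∀ i, p i ↔ q i) :
    ∑ i ∈ univ.filter p, l i = ∑ i ∈ univ.filter q, l i := by
  congr 1
  ext i
  simp [h i]

lemma mMinus_spec (hN : 1 ≤ N) {l : Fin N → ℝ} (hl1 : ∑ i, l i = 1)
    (x : Fin N → ℝ) :
    (∃ j, mMinus l x = x j) ∧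
      sumWeightLt l x (mMinus l x) < 1 / 2 ∧ 1 / 2 ≤ sumWeightLe l x (mMinus l x) := by
  have hne : (univ : Finset (Fin N)).Nonempty := ⟨⟨0, hN⟩, mem_univ _⟩
  set S := {z : ℝ | 1 / 2 ≤ sumWeightLe l x z} with hSdef
  have hMS : univ.sup' hne x ∈ S := by
    have h1 : univ.filter (fun i => x i ≤ univ.sup' hne x) = univ := by
      ext i
      simp only [mem_filter, mem_univ, true_and, iff_true]
      exact Finset.le_sup' x (mem_univ i)
    simp only [hSdef, Set.mem_setOf_eq, sumWeightLe, h1, hl1]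
    norm_num
  have hSne : S.Nonempty := ⟨_, hMS⟩
  have hbdd : univ.inf' hne x ∈ lowerBounds S := by
    intro z hz
    by_contra h
    push_neg at h
    have h1 : univ.filter (fun i => x i ≤ z) = ∅ := by
      ext i
      simp only [mem_filter, mem_univ, true_and, notMem_empty, iff_false, not_le]
      exact lt_of_lt_of_le h (Finset.inf'_le x (mem_univ i))
    simp only [hSdef, Set.mem_setOf_eq, sumWeightLe, h1, Finset.sum_empty] at hz
    norm_num at hz
  have hmS : mMinus l x = sInf S := rfl
  have h3 : 1 / 2 ≤ sumWeightLe l x (mMinus l x) := by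
    by_cases hA : (univ.filter (fun i => mMinus l x < x i)).Nonempty
    · set w := (univ.filter (fun i => mMinus l x < x i)).inf' hA x with hw
      have hmw : mMinus l x < w := by
        rw [hw, Finset.lt_inf'_iff]
        intro i hi
        exact (mem_filter.1 hi).2
      obtain ⟨z, hzS, hzw⟩ := exists_lt_of_csInf_lt hSne (hmS ▸ hmw)
      have hmz : mMinus l x ≤ z := hmS ▸ csInf_le ⟨_, hbdd⟩ hzS
      have heq : sumWeightLe l x (mMinus l x) = sumWeightLe l x z := by
        apply sumW_congr
        intro i
        constructor
        · exact fun h => h.trans hmz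
        · intro h
          by_contra hc
          push_neg at hc
          have : w ≤ x i := Finset.inf'_le x (by simp [hc])
          linarith
      rw [heq]; exact hzS
    · have h1 : univ.filter (fun i => x i ≤ mMinus l x) = univ := by
        ext i
        simp only [mem_filter, mem_univ, true_and, iff_true]
        by_contra hc
        push_neg at hc
        exact hA ⟨i, by simp [hc]⟩
      simp only [sumWeightLe, h1, hl1]
      norm_num
  have h1 : ∃ j, mMinus l x = x j := by
    by_contra h
    push_neg at h
    by_cases hB : (univ.filter (fun i => x i < mMinus l x)).Nonempty
    · set w := (univ.filter (fun i => x i < mMinus l x)).sup' hB x with hw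
      have hwm : w < mMinus l x := by
        rw [hw, Finset.sup'_lt_iff]
        intro i hi
        exact (mem_filter.1 hi).2
      have heq : sumWeightLe l x w = sumWeightLe l x (mMinus l x) := by
        apply sumW_congr
        intro i
        constructor
        · exact fun hle => hle.trans hwm.le
        · intro hle
          have hlt : x i < mMinus l x := lt_of_le_of_ne hle (fun he => h i he.symm)
          exact Finset.le_sup' x (by simp [hlt])
      have hwS : w ∈ S := by
        simp only [hSdef, Set.mem_setOf_eq]
        rw [heq]; exact h3
      have := hmS ▸ csInf_le ⟨_, hbdd⟩ hwS
      linarith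
    · have h1 : univ.filter (fun i => x i ≤ mMinus l x) = ∅ := by
        ext i
        simp only [mem_filter, mem_univ, true_and, notMem_empty, iff_false, not_le]
        rcases lt_trichotomy (x i) (mMinus l x) with hc | hc | hc
        · exact absurd ⟨i, by simp [hc]⟩ hB
        · exact absurd hc.symm (h i)
        · exact hc
      simp only [sumWeightLe, h1, Finset.sum_empty] at h3
      norm_num at h3
  have h2 : sumWeightLt l x (mMinus l x) < 1 / 2 := by
    by_cases hB : (univ.filter (fun i => x i < mMinus l x)).Nonempty
    · set w := (univ.filter (fun i => x i < mMinus l x)).sup' hB x with hw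
      have hwm : w < mMinus l x := by
        rw [hw, Finset.sup'_lt_iff]
        intro i hi
        exact (mem_filter.1 hi).2
      have hwnS : w ∉ S := by
        intro hwS
        have := hmS ▸ csInf_le ⟨_, hbdd⟩ hwS
        linarith
      have heq : sumWeightLt l x (mMinus l x) = sumWeightLe l x w := by
        apply sumW_congr
        intro i
        constructor
        · intro hlt
          exact Finset.le_sup' x (by simp [hlt])
        · exact fun hle => lt_of_le_of_lt hle hwm
      rw [heq]
      simpa [hSdef, Set.mem_setOf_eq, not_le] using hwnS
    · have h1 : univ.filter (fun i => x i < mMinus l x) = ∅ := by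
        rw [Finset.filter_eq_empty_iff]
        intro i _
        exact fun hc => hB ⟨i, by simp [hc]⟩
      simp only [sumWeightLt, h1, Finset.sum_empty]
      norm_num
  exact ⟨h1, h2, h3⟩

lemma mPlus_spec (hN : 1 ≤ N) {l : Fin N → ℝ} (hl1 : ∑ i, l i = 1)
    (x : Fin N → ℝ) :
    (∃ j, mPlus l x = x j) ∧
      sumWeightLt l x (mPlus l x) ≤ 1 / 2 ∧ 1 / 2 < sumWeightLe l x (mPlus l x) := by
  have hne : (univ : Finset (Fin N)).Nonempty := ⟨⟨0, hN⟩, mem_univ _⟩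
  set T := {z : ℝ | sumWeightLt l x z ≤ 1 / 2} with hTdef
  have hm0T : univ.inf' hne x ∈ T := by
    have h1 : univ.filter (fun i => x i < univ.inf' hne x) = ∅ := by
      rw [Finset.filter_eq_empty_iff]
      intro i _
      exact not_lt.2 (Finset.inf'_le x (mem_univ i))
    simp only [hTdef, Set.mem_setOf_eq, sumWeightLt, h1, Finset.sum_empty]
    norm_num
  have hTne : T.Nonempty := ⟨_, hm0T⟩
  have hbdd : univ.sup' hne x + 1 ∈ upperBounds T := by
    intro z hz
    by_contra h
    push_neg at h
    have h1 : univ.filter (fun i => x i < z) = univ := by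
      ext i
      simp only [mem_filter, mem_univ, true_and, iff_true]
      have := Finset.le_sup' x (mem_univ i)
      linarith
    simp only [hTdef, Set.mem_setOf_eq, sumWeightLt, h1, hl1] at hz
    norm_num at hz
  have hmT : mPlus l x = sSup T := rfl
  have h2 : sumWeightLt l x (mPlus l x) ≤ 1 / 2 := by
    by_cases hB : (univ.filter (fun i => x i < mPlus l x)).Nonempty
    · set w := (univ.filter (fun i => x i < mPlus l x)).sup' hB x with hw
      have hwm : w < mPlus l x := by
        rw [hw, Finset.sup'_lt_iff]
        intro i hi
        exact (mem_filter.1 hi).2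
      obtain ⟨t, htT, hwt⟩ := exists_lt_of_lt_csSup hTne (hmT ▸ hwm)
      have htm : t ≤ mPlus l x := hmT ▸ le_csSup ⟨_, hbdd⟩ htT
      have heq : sumWeightLt l x (mPlus l x) = sumWeightLt l x t := by
        apply sumW_congr
        intro i
        constructor
        · intro hlt
          have : x i ≤ w := Finset.le_sup' x (by simp [hlt])
          linarith
        · exact fun hlt => lt_of_lt_of_le hlt htm
      rw [heq]; exact htT
    · have h1 : univ.filter (fun i => x i < mPlus l x) = ∅ := by
        rw [Finset.filter_eq_empty_iff]
        intro i _
        exact fun hc => hB ⟨i, by simp [hc]⟩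
      simp only [sumWeightLt, h1, Finset.sum_empty]
      norm_num
  have h1 : ∃ j, mPlus l x = x j := by
    by_contra h
    push_neg at h
    set z := if hA : (univ.filter (fun i => mPlus l x < x i)).Nonempty then
        (univ.filter (fun i => mPlus l x < x i)).inf' hA x else mPlus l x + 1 with hz
    have hmz : mPlus l x < z := by
      rw [hz]
      split
      · rw [Finset.lt_inf'_iff]
        intro i hi
        exact (mem_filter.1 hi).2
      · linarith
    have hzsmall : ∀ i, x i < z → x i < mPlus l x := by
      intro i hiz
      rcases lt_trichotomy (x i) (mPlus l x) with hc | hc | hc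
      · exact hc
      · exact absurd hc.symm (h i)
      · exfalso
        have hA : (univ.filter (fun i => mPlus l x < x i)).Nonempty := ⟨i, by simp [hc]⟩
        have hzi : z ≤ x i := by
          rw [hz, dif_pos hA]
          exact Finset.inf'_le x (by simp [hc])
        linarith
    have heq : sumWeightLt l x z = sumWeightLt l x (mPlus l x) := by
      apply sumW_congr
      intro i
      exact ⟨hzsmall i, fun hlt => lt_trans hlt hmz⟩
    have hzT : z ∈ T := by
      simp only [hTdef, Set.mem_setOf_eq]
      rw [heq]; exact h2
    have := hmT ▸ le_csSup ⟨_, hbdd⟩ hzT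
    linarith
  have h3 : 1 / 2 < sumWeightLe l x (mPlus l x) := by
    set z := if hA : (univ.filter (fun i => mPlus l x < x i)).Nonempty then
        (univ.filter (fun i => mPlus l x < x i)).inf' hA x else mPlus l x + 1 with hz
    have hmz : mPlus l x < z := by
      rw [hz]
      split
      · rw [Finset.lt_inf'_iff]
        intro i hi
        exact (mem_filter.1 hi).2
      · linarith
    have hzsmall : ∀ i, x i < z → x i ≤ mPlus l x := by
      intro i hiz
      by_contra hc
      push_neg at hc
      have hA : (univ.filter (fun i => mPlus l x < x i)).Nonempty := ⟨i, by simp [hc]⟩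
      have hzi : z ≤ x i := by
        rw [hz, dif_pos hA]
        exact Finset.inf'_le x (by simp [hc])
      linarith
    have heq : sumWeightLt l x z = sumWeightLe l x (mPlus l x) := by
      apply sumW_congr
      intro i
      exact ⟨hzsmall i, fun hle => lt_of_le_of_lt hle hmz⟩
    have hznT : z ∉ T := by
      intro hzT
      have := hmT ▸ le_csSup ⟨_, hbdd⟩ hzT
      linarith
    have hcon : ¬ sumWeightLt l x z ≤ 1 / 2 := hznT
    rw [heq] at hcon
    linarith
  exact ⟨h1, h2, h3⟩

lemma mMinus_bound {l : Fin N → ℝ} (hl0 : ∀ i, 0 ≤ l i)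
    {x : Fin N → ℝ} {ε : ℝ} (hε : 0 < ε)
    (hsep : ∀ i, x i ≠ mMinus l x → 3 * ε ≤ |x i - mMinus l x|)
    (hj : ∃ j, mMinus l x = x j)
    (h2 : sumWeightLt l x (mMinus l x) < 1 / 2)
    (h3 : 1 / 2 ≤ sumWeightLe l x (mMinus l x))
    {y : Fin N → ℝ} (hy : ∀ i, |y i - x i| ≤ ε) :
    mMinus l x + sInf ((fun i => y i - x i) '' {i | mMinus l x = x i}) ≤ mMinus l y ∧
      mMinus l y ≤ mMinus l x + sSup ((fun i => y i - x i) '' {i | mMinus l x = x i}) := by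
  obtain ⟨j, hjm⟩ := hj
  set m := mMinus l x with hm
  set D := (fun i => y i - x i) '' {i | mMinus l x = x i} with hD
  have hDfin : D.Finite := (Set.finite_range _).subset (Set.image_subset_range _ _)
  have hjD : (y j - x j) ∈ D := ⟨j, hjm, rfl⟩
  have hbb : BddBelow D := hDfin.bddBelow
  have hba : BddAbove D := hDfin.bddAbove
  set a := m + sInf D with ha
  set b := m + sSup D with hb
  have haub : a ≤ m + ε := by
    have h1 : sInf D ≤ y j - x j := csInf_le hbb hjD
    have := (abs_le.1 (hy j)).2
    simp only [ha]
    linarith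
  have hblb : m - ε ≤ b := by
    have h1 : y j - x j ≤ sSup D := le_csSup hba hjD
    have := (abs_le.1 (hy j)).1
    simp only [hb]
    linarith
  have hlb : ∀ z ∈ {z : ℝ | 1 / 2 ≤ sumWeightLe l y z}, a ≤ z := by
    intro z hz
    by_contra hc
    push_neg at hc
    have hsub : ∀ i, y i ≤ z → x i < m := by
      intro i hiz
      rcases lt_trichotomy (x i) m with h | h | h
      · exact h
      · exfalso
        have hiD : (y i - x i) ∈ D := ⟨i, h.symm, rfl⟩
        have h4 := csInf_le hbb hiD
        have : a ≤ y i := by simp only [ha]; linarith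
        linarith
      · exfalso
        have hs := hsep i (ne_of_gt h)
        rw [abs_of_pos (by linarith)] at hs
        have := (abs_le.1 (hy i)).1
        linarith
    have hle : sumWeightLe l y z ≤ sumWeightLt l x m := sumW_mono hl0 hsub
    simp only [Set.mem_setOf_eq] at hz
    linarith
  have hbS : 1 / 2 ≤ sumWeightLe l y b := by
    have hsub : ∀ i, x i ≤ m → y i ≤ b := by
      intro i him
      rcases eq_or_lt_of_le him with h | h
      · have hiD : (y i - x i) ∈ D := ⟨i, h.symm, rfl⟩
        have := le_csSup hba hiD
        simp only [hb]
        linarith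
      · have hs := hsep i (ne_of_lt h)
        rw [abs_of_neg (by linarith)] at hs
        have := (abs_le.1 (hy i)).2
        linarith
    have hle : sumWeightLe l x m ≤ sumWeightLe l y b := sumW_mono hl0 hsub
    linarith
  have hSne : {z : ℝ | 1 / 2 ≤ sumWeightLe l y z}.Nonempty := ⟨b, hbS⟩
  constructor
  · exact le_csInf hSne hlb
  · exact csInf_le ⟨a, hlb⟩ hbS

lemma mPlus_bound {l : Fin N → ℝ} (hl0 : ∀ i, 0 ≤ l i)
    {x : Fin N → ℝ} {ε : ℝ} (hε : 0 < ε)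
    (hsep : ∀ i, x i ≠ mPlus l x → 3 * ε ≤ |x i - mPlus l x|)
    (hj : ∃ j, mPlus l x = x j)
    (h2 : sumWeightLt l x (mPlus l x) ≤ 1 / 2)
    (h3 : 1 / 2 < sumWeightLe l x (mPlus l x))
    {y : Fin N → ℝ} (hy : ∀ i, |y i - x i| ≤ ε) :
    mPlus l x + sInf ((fun i => y i - x i) '' {i | mPlus l x = x i}) ≤ mPlus l y ∧
      mPlus l y ≤ mPlus l x + sSup ((fun i => y i - x i) '' {i | mPlus l x = x i}) := by
  obtain ⟨j, hjm⟩ := hj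
  set m := mPlus l x with hm
  set D := (fun i => y i - x i) '' {i | mPlus l x = x i} with hD
  have hDfin : D.Finite := (Set.finite_range _).subset (Set.image_subset_range _ _)
  have hjD : (y j - x j) ∈ D := ⟨j, hjm, rfl⟩
  have hbb : BddBelow D := hDfin.bddBelow
  have hba : BddAbove D := hDfin.bddAbove
  set a := m + sInf D with ha
  set b := m + sSup D with hb
  have haub : a ≤ m + ε := by
    have h1 : sInf D ≤ y j - x j := csInf_le hbb hjD
    have := (abs_le.1 (hy j)).2
    simp only [ha]
    linarith
  have hblb : m - ε ≤ b := by
    have h1 : y j - x j ≤ sSup D := le_csSup hba hjD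
    have := (abs_le.1 (hy j)).1
    simp only [hb]
    linarith
  have haT : sumWeightLt l y a ≤ 1 / 2 := by
    have hsub : ∀ i, y i < a → x i < m := by
      intro i hiz
      rcases lt_trichotomy (x i) m with h | h | h
      · exact h
      · exfalso
        have hiD : (y i - x i) ∈ D := ⟨i, h.symm, rfl⟩
        have h4 := csInf_le hbb hiD
        have : a ≤ y i := by simp only [ha]; linarith
        linarith
      · exfalso
        have hs := hsep i (ne_of_gt h)
        rw [abs_of_pos (by linarith)] at hs
        have := (abs_le.1 (hy i)).1
        linarith
    have hle : sumWeightLt l y a ≤ sumWeightLt l x m := sumW_mono hl0 hsub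
    linarith
  have hub : ∀ z ∈ {z : ℝ | sumWeightLt l y z ≤ 1 / 2}, z ≤ b := by
    intro z hz
    by_contra hc
    push_neg at hc
    have hsub : ∀ i, x i ≤ m → y i < z := by
      intro i him
      rcases eq_or_lt_of_le him with h | h
      · have hiD : (y i - x i) ∈ D := ⟨i, h.symm, rfl⟩
        have h4 := le_csSup hba hiD
        have : y i ≤ b := by simp only [hb]; linarith
        linarith
      · have hs := hsep i (ne_of_lt h)
        rw [abs_of_neg (by linarith)] at hs
        have := (abs_le.1 (hy i)).2
        linarith
    have hle : sumWeightLe l x m ≤ sumWeightLt l y z := sumW_mono hl0 hsub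
    simp only [Set.mem_setOf_eq] at hz
    linarith
  have hTne : {z : ℝ | sumWeightLt l y z ≤ 1 / 2}.Nonempty := ⟨a, haT⟩
  constructor
  · exact le_csSup ⟨b, hub⟩ haT
  · exact csSup_le hTne hub

end Aux

/-- Refined local bounds for the weighted medians: the attainment sets
`I_±(x) = {i : m^±_λ(x) = xᵢ}` are nonempty, and for every `x` there is `ε > 0` such that
for all `y` with `‖x − y‖_∞ ≤ ε` (the sup distance on `Fin N → ℝ`),
`m^±_λ(x) + min_{i ∈ I_±(x)} (yᵢ − xᵢ) ≤ m^±_λ(y) ≤ m^±_λ(x) + max_{i ∈ I_±(x)} (yᵢ − xᵢ)`. -/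
theorem weightedMedian_refined_local_bounds
    {N : ℕ} (hN : 1 ≤ N) {l : Fin N → ℝ} (hl : memSimplex l) (x : Fin N → ℝ) :
    {i : Fin N | mMinus l x = x i}.Nonempty ∧
    {i : Fin N | mPlus l x = x i}.Nonempty ∧
    ∃ ε > (0 : ℝ), ∀ y : Fin N → ℝ, dist x y ≤ ε →
      (mMinus l x + sInf ((fun i => y i - x i) '' {i : Fin N | mMinus l x = x i}) ≤
          mMinus l y ∧
        mMinus l y ≤
          mMinus l x + sSup ((fun i => y i - x i) '' {i : Fin N | mMinus l x = x i})) ∧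
      (mPlus l x + sInf ((fun i => y i - x i) '' {i : Fin N | mPlus l x = x i}) ≤
          mPlus l y ∧
        mPlus l y ≤
          mPlus l x + sSup ((fun i => y i - x i) '' {i : Fin N | mPlus l x = x i})) := by
  classical
  obtain ⟨hl0, hl1⟩ := hl
  obtain ⟨hj1, h2, h3⟩ := mMinus_spec hN hl1 x
  obtain ⟨hj2, h2', h3'⟩ := mPlus_spec hN hl1 x
  refine ⟨⟨hj1.choose, hj1.choose_spec⟩, ⟨hj2.choose, hj2.choose_spec⟩, ?_⟩
  set s : Finset ℝ := insert 3
      (((univ.filter (fun i => x i ≠ mMinus l x)).image (fun i => |x i - mMinus l x|)) ∪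
        ((univ.filter (fun i => x i ≠ mPlus l x)).image (fun i => |x i - mPlus l x|))) with hs
  have hsne : s.Nonempty := ⟨3, mem_insert_self _ _⟩
  have hspos : 0 < s.min' hsne := by
    have hmem := s.min'_mem hsne
    simp only [hs, mem_insert, mem_union, mem_image, mem_filter, mem_univ, true_and] at hmem
    rcases hmem with h | ⟨i, hne', hei⟩ | ⟨i, hne', hei⟩
    · rw [h]; norm_num
    · rw [← hei]; exact abs_pos.2 (sub_ne_zero.2 hne')
    · rw [← hei]; exact abs_pos.2 (sub_ne_zero.2 hne')
  set ε := s.min' hsne / 3 with hεdef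
  have hε : 0 < ε := by
    rw [hεdef]; linarith
  have h3ε : 3 * ε = s.min' hsne := by rw [hεdef]; ring
  have hsep1 : ∀ i, x i ≠ mMinus l x → 3 * ε ≤ |x i - mMinus l x| := by
    intro i hi
    have hmem : |x i - mMinus l x| ∈ s := by
      simp only [hs, mem_insert, mem_union, mem_image, mem_filter, mem_univ, true_and]
      exact Or.inr (Or.inl ⟨i, hi, rfl⟩)
    have := Finset.min'_le s _ hmem
    linarith
  have hsep2 : ∀ i, x i ≠ mPlus l x → 3 * ε ≤ |x i - mPlus l x| := by
    intro i hi
    have hmem : |x i - mPlus l x| ∈ s := by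
      simp only [hs, mem_insert, mem_union, mem_image, mem_filter, mem_univ, true_and]
      exact Or.inr (Or.inr ⟨i, hi, rfl⟩)
    have := Finset.min'_le s _ hmem
    linarith
  refine ⟨ε, hε, fun y hdist => ?_⟩
  have hy : ∀ i, |y i - x i| ≤ ε := by
    intro i
    have h := dist_le_pi_dist x y i
    rw [Real.dist_eq] at h
    rw [abs_sub_comm]
    linarith
  exact ⟨mMinus_bound hl0 hε hsep1 hj1 h2 h3 hy, mPlus_bound hl0 hε hsep2 hj2 h2' h3' hy⟩
end

section
/- Let N ≥ 1, λ ∈ Δ_N, and x₁,…,x_N ∈ ℝ^d (with the Euclidean norm |·|). A point x ∈ ℝ^d minimizes the function y ↦ ∑ᵢ λᵢ |y − xᵢ| if and only if there exist p₁,…,p_N ∈ ℝ^d with |pᵢ| ≤ 1 and ⟨pᵢ, x − xᵢ⟩ = |x − xᵢ| for all i, and ∑ᵢ λᵢ pᵢ = 0. Moreover, every such minimizer is a convex combination of x₁,…,x_N, i.e. the set M_λ(x₁,…,x_N) of minimizers is contained in the convex hull of {x₁,…,x_N}. -/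
open Finset in
/-- Quadratic upper bound for the norm near a nonzero point. -/
lemma norm_sub_smul_le_aux {d : ℕ} (a u : EuclideanSpace ℝ (Fin d)) (ha : a ≠ 0) (t : ℝ) :
    ‖a - t • u‖ ≤ ‖a‖ - t * (inner ℝ ((‖a‖)⁻¹ • a) u : ℝ) + t ^ 2 * (‖u‖ ^ 2 / (2 * ‖a‖)) := by
  have hna : (0:ℝ) < ‖a‖ := norm_pos_iff.2 ha
  have hexp : ‖a - t • u‖ ^ 2 = ‖a‖ ^ 2 - 2 * t * (inner ℝ a u : ℝ) + t ^ 2 * ‖u‖ ^ 2 := by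
    rw [norm_sub_sq_real, real_inner_smul_right, norm_smul]
    simp [mul_pow, sq_abs]; ring
  have h2 : 2 * ‖a‖ * ‖a - t • u‖ ≤ ‖a‖ ^ 2 + ‖a - t • u‖ ^ 2 := by
    nlinarith [sq_nonneg (‖a‖ - ‖a - t • u‖)]
  have hinner : (inner ℝ ((‖a‖)⁻¹ • a) u : ℝ) = (‖a‖)⁻¹ * (inner ℝ a u : ℝ) :=
    real_inner_smul_left _ _ _
  rw [hinner, ← mul_le_mul_iff_of_pos_left (show (0:ℝ) < 2 * ‖a‖ by positivity)]
  have e3 : 2 * ‖a‖ * (‖a‖ - t * ((‖a‖)⁻¹ * (inner ℝ a u : ℝ))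
        + t ^ 2 * (‖u‖ ^ 2 / (2 * ‖a‖)))
      = ‖a‖ ^ 2 + (‖a‖ ^ 2 - 2 * t * (inner ℝ a u : ℝ) + t ^ 2 * ‖u‖ ^ 2) := by
    field_simp
    ring
  rw [e3, ← hexp]
  exact h2

set_option maxHeartbeats 1000000 in
open Finset in
/-- Torricelli–Fermat–Weber points: `x` minimizes
`y ↦ ∑ᵢ λᵢ |y − xᵢ|` on Euclidean `ℝ^d` iff there exist `p₁,…,p_N` with `|pᵢ| ≤ 1`,
`⟨pᵢ, x − xᵢ⟩ = |x − xᵢ|` and `∑ᵢ λᵢ pᵢ = 0`; moreover every minimizer lies in the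
convex hull of `{x₁,…,x_N}`. -/
theorem geometricMedian_characterization_and_convexHull
    {d N : ℕ} (hN : 1 ≤ N) {l : Fin N → ℝ} (hl : memSimplex l)
    (xs : Fin N → EuclideanSpace ℝ (Fin d)) :
    (∀ x : EuclideanSpace ℝ (Fin d),
      (∀ y : EuclideanSpace ℝ (Fin d),
          ∑ i, l i * ‖x - xs i‖ ≤ ∑ i, l i * ‖y - xs i‖) ↔
        ∃ p : Fin N → EuclideanSpace ℝ (Fin d),
          (∀ i, ‖p i‖ ≤ 1 ∧ (inner ℝ (p i) (x - xs i) : ℝ) = ‖x - xs i‖) ∧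
          ∑ i, l i • p i = 0) ∧
    {x : EuclideanSpace ℝ (Fin d) |
        ∀ y : EuclideanSpace ℝ (Fin d),
          ∑ i, l i * ‖x - xs i‖ ≤ ∑ i, l i * ‖y - xs i‖} ⊆
      convexHull ℝ (Set.range xs) := by
  obtain ⟨hl0, hl1⟩ := hl
  -- The easy ("sufficiency") direction of the characterization.
  have bwd : ∀ x : EuclideanSpace ℝ (Fin d),
      (∃ p : Fin N → EuclideanSpace ℝ (Fin d),
          (∀ i, ‖p i‖ ≤ 1 ∧ (inner ℝ (p i) (x - xs i) : ℝ) = ‖x - xs i‖) ∧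
          ∑ i, l i • p i = 0) →
      ∀ y : EuclideanSpace ℝ (Fin d),
          ∑ i, l i * ‖x - xs i‖ ≤ ∑ i, l i * ‖y - xs i‖ := by
    rintro x ⟨p, hp, hsum⟩ y
    have hz : ∑ i, l i * (inner ℝ (p i) (x - y) : ℝ) = 0 := by
      have : ∑ i, l i * (inner ℝ (p i) (x - y) : ℝ)
          = (inner ℝ (∑ i, l i • p i) (x - y) : ℝ) := by
        rw [sum_inner]
        exact Finset.sum_congr rfl fun i _ => (real_inner_smul_left _ _ _).symm
      rw [this, hsum, inner_zero_left]
    have hterm : ∀ i, l i * ‖x - xs i‖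
        ≤ l i * ‖y - xs i‖ + l i * (inner ℝ (p i) (x - y) : ℝ) := by
      intro i
      obtain ⟨h1, h2⟩ := hp i
      have h3 : (inner ℝ (p i) (x - xs i) : ℝ)
          = (inner ℝ (p i) (y - xs i) : ℝ) + (inner ℝ (p i) (x - y) : ℝ) := by
        rw [← inner_add_right]
        congr 1
        abel
      have h4 : (inner ℝ (p i) (y - xs i) : ℝ) ≤ ‖y - xs i‖ := by
        calc (inner ℝ (p i) (y - xs i) : ℝ) ≤ ‖p i‖ * ‖y - xs i‖ := real_inner_le_norm _ _
          _ ≤ 1 * ‖y - xs i‖ := mul_le_mul_of_nonneg_right h1 (norm_nonneg _)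
          _ = ‖y - xs i‖ := one_mul _
      nlinarith [hl0 i]
    calc ∑ i, l i * ‖x - xs i‖
        ≤ ∑ i, (l i * ‖y - xs i‖ + l i * (inner ℝ (p i) (x - y) : ℝ)) :=
          Finset.sum_le_sum fun i _ => hterm i
      _ = ∑ i, l i * ‖y - xs i‖ + ∑ i, l i * (inner ℝ (p i) (x - y) : ℝ) :=
          Finset.sum_add_distrib
      _ = ∑ i, l i * ‖y - xs i‖ := by rw [hz, add_zero]
  refine ⟨fun x => ⟨fun hx => ?_, bwd x⟩, ?_⟩
  · -- The "necessity" direction.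
    classical
    set S : Finset (Fin N) := univ.filter (fun i => x - xs i ≠ 0) with hS
    set q : Fin N → EuclideanSpace ℝ (Fin d) :=
      fun i => (‖x - xs i‖)⁻¹ • (x - xs i) with hq
    set v : EuclideanSpace ℝ (Fin d) := ∑ i ∈ S, l i • q i with hv
    set μ : ℝ := ∑ i ∈ univ.filter (fun i => ¬ x - xs i ≠ 0), l i with hμ
    have hμ0 : 0 ≤ μ := Finset.sum_nonneg fun i _ => hl0 i
    -- The key first-order optimality bound.
    have key : ∀ u : EuclideanSpace ℝ (Fin d), (inner ℝ v u : ℝ) ≤ μ * ‖u‖ := by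
      intro u
      apply le_of_forall_pos_le_add
      intro ε hε
      set C : ℝ := ∑ i ∈ S, l i * (‖u‖ ^ 2 / (2 * ‖x - xs i‖)) with hC
      have hC0 : 0 ≤ C :=
        Finset.sum_nonneg fun i _ => mul_nonneg (hl0 i) (by positivity)
      set t : ℝ := ε / (C + 1) with ht
      have ht0 : 0 < t := by positivity
      have h1 := hx (x - t • u)
      -- sums restricted to S
      have hsplitx : ∑ i, l i * ‖x - xs i‖ = ∑ i ∈ S, l i * ‖x - xs i‖ := by
        rw [← Finset.sum_filter_add_sum_filter_not univ (fun i => x - xs i ≠ 0)]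
        have : ∑ i ∈ univ.filter (fun i => ¬ x - xs i ≠ 0), l i * ‖x - xs i‖ = 0 := by
          apply Finset.sum_eq_zero
          intro i hi
          simp only [Finset.mem_filter, not_not] at hi
          rw [hi.2]; simp
        rw [this, add_zero]
      have hsplity : ∑ i, l i * ‖x - t • u - xs i‖
          = ∑ i ∈ S, l i * ‖x - t • u - xs i‖ + μ * (t * ‖u‖) := by
        rw [← Finset.sum_filter_add_sum_filter_not univ (fun i => x - xs i ≠ 0)]
        congr 1
        rw [hμ, Finset.sum_mul]
        apply Finset.sum_congr rfl
        intro i hi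
        simp only [Finset.mem_filter, not_not] at hi
        have he : x - t • u - xs i = -(t • u) := by
          rw [sub_right_comm, hi.2, zero_sub]
        rw [he, norm_neg, norm_smul, Real.norm_eq_abs, abs_of_pos ht0]
      -- termwise quadratic bound on S
      have hterm : ∀ i ∈ S, l i * ‖x - t • u - xs i‖
          ≤ l i * ‖x - xs i‖ - t * (l i * (inner ℝ (q i) u : ℝ))
            + t ^ 2 * (l i * (‖u‖ ^ 2 / (2 * ‖x - xs i‖))) := by
        intro i hi
        simp only [hS, Finset.mem_filter] at hi
        have haux := norm_sub_smul_le_aux (x - xs i) u hi.2 t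
        have hrw : x - t • u - xs i = (x - xs i) - t • u := by abel
        rw [hrw]
        have hli := hl0 i
        have hqi : (inner ℝ (q i) u : ℝ) = (inner ℝ ((‖x - xs i‖)⁻¹ • (x - xs i)) u : ℝ) := rfl
        rw [hqi]
        nlinarith [mul_le_mul_of_nonneg_left haux hli]
      have hsum2 : ∑ i ∈ S, l i * ‖x - t • u - xs i‖
          ≤ ∑ i ∈ S, l i * ‖x - xs i‖ - t * (inner ℝ v u : ℝ) + t ^ 2 * C := by
        have hvu : (inner ℝ v u : ℝ) = ∑ i ∈ S, l i * (inner ℝ (q i) u : ℝ) := by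
          rw [hv, sum_inner]
          exact Finset.sum_congr rfl fun i _ => real_inner_smul_left _ _ _
        calc ∑ i ∈ S, l i * ‖x - t • u - xs i‖
            ≤ ∑ i ∈ S, (l i * ‖x - xs i‖ - t * (l i * (inner ℝ (q i) u : ℝ))
              + t ^ 2 * (l i * (‖u‖ ^ 2 / (2 * ‖x - xs i‖)))) :=
              Finset.sum_le_sum hterm
          _ = ∑ i ∈ S, l i * ‖x - xs i‖ - t * (inner ℝ v u : ℝ) + t ^ 2 * C := by
              rw [hvu, hC, Finset.sum_add_distrib, Finset.sum_sub_distrib,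
                Finset.mul_sum, Finset.mul_sum]
      rw [hsplitx, hsplity] at h1
      have h2 : t * (inner ℝ v u : ℝ) ≤ t * (t * C + μ * ‖u‖) := by
        have e : t * (t * C + μ * ‖u‖) = t ^ 2 * C + μ * (t * ‖u‖) := by ring
        rw [e]
        linarith
      have h3 : (inner ℝ v u : ℝ) ≤ t * C + μ * ‖u‖ := (mul_le_mul_iff_of_pos_left ht0).1 h2
      have htC : t * C ≤ ε := by
        rw [ht, div_mul_eq_mul_div, div_le_iff₀ (by positivity)]
        nlinarith
      linarith
    have hvμ : ‖v‖ ≤ μ := by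
      rcases eq_or_ne v 0 with h | h
      · simpa [h] using hμ0
      · have h1 := key v
        rw [real_inner_self_eq_norm_sq] at h1
        have h2 : 0 < ‖v‖ := norm_pos_iff.2 h
        nlinarith
    refine ⟨fun i => if x - xs i ≠ 0 then q i else -(μ⁻¹ • v), fun i => ?_, ?_⟩
    · beta_reduce
      by_cases h : x - xs i ≠ 0
      · have hn : (0:ℝ) < ‖x - xs i‖ := norm_pos_iff.2 h
        rw [if_pos h]
        constructor
        · show ‖(‖x - xs i‖⁻¹ • (x - xs i) : EuclideanSpace ℝ (Fin d))‖ ≤ 1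
          rw [norm_smul, norm_inv, norm_norm, inv_mul_cancel₀ hn.ne']
        · show (inner ℝ ((‖x - xs i‖⁻¹ • (x - xs i)) : EuclideanSpace ℝ (Fin d))
              (x - xs i) : ℝ) = ‖x - xs i‖
          rw [real_inner_smul_left, real_inner_self_eq_norm_sq]
          field_simp [hn.ne']
      · rw [if_neg h]
        rw [not_not] at h
        refine ⟨?_, by rw [h, inner_zero_right, norm_zero]⟩
        rw [norm_neg, norm_smul, norm_inv, Real.norm_eq_abs, abs_of_nonneg hμ0]
        rcases hμ0.lt_or_eq with hμp | hμz
        · rw [← div_eq_inv_mul, div_le_one hμp]; exact hvμ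
        · have hv0 : v = 0 := by
            rw [← hμz] at hvμ; exact norm_le_zero_iff.1 hvμ
          simp [hv0]
    · have hsplit : (∑ i, l i • (if x - xs i ≠ 0 then q i else -(μ⁻¹ • v)))
          = ∑ i ∈ S, l i • q i
            + ∑ i ∈ univ.filter (fun i => ¬ x - xs i ≠ 0), l i • -(μ⁻¹ • v) := by
        rw [← Finset.sum_filter_add_sum_filter_not univ (fun i => x - xs i ≠ 0)]
        congr 1
        · exact Finset.sum_congr rfl fun i hi => by
            simp only [hS, Finset.mem_filter] at hi; rw [if_pos hi.2]
        · exact Finset.sum_congr rfl fun i hi => by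
            simp only [Finset.mem_filter] at hi; rw [if_neg hi.2]
      rw [hsplit]
      have h2 : ∑ i ∈ univ.filter (fun i => ¬ x - xs i ≠ 0), l i • -(μ⁻¹ • v)
          = -((μ * μ⁻¹) • v) := by
        rw [← Finset.sum_smul, ← hμ, smul_neg, smul_smul]
      rw [h2, ← hv]
      rcases hμ0.lt_or_eq with hμp | hμz
      · rw [mul_inv_cancel₀ hμp.ne', one_smul, add_neg_cancel]
      · have hv0 : v = 0 := by
          rw [← hμz] at hvμ; exact norm_le_zero_iff.1 hvμ
        simp [hv0]
  · -- Convex hull containment.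
    intro x hx
    by_contra hxK
    set K : Set (EuclideanSpace ℝ (Fin d)) := convexHull ℝ (Set.range xs) with hK
    have hKne : K.Nonempty := ⟨xs ⟨0, hN⟩, subset_convexHull _ _ ⟨⟨0, hN⟩, rfl⟩⟩
    have hKcl : IsClosed K := (Set.finite_range xs).isClosed_convexHull ℝ
    have hKconv : Convex ℝ K := convex_convexHull _ _
    obtain ⟨z, hzK, hz⟩ :=
      exists_norm_eq_iInf_of_complete_convex hKne hKcl.isComplete hKconv x
    have hproj := (norm_eq_iInf_iff_real_inner_le_zero hKconv hzK).1 hz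
    have hxz : x - z ≠ 0 := sub_ne_zero.2 fun h => hxK (h ▸ hzK)
    have hxzpos : (0:ℝ) < ‖x - z‖ := norm_pos_iff.2 hxz
    have hlt : ∀ i, ‖z - xs i‖ < ‖x - xs i‖ := by
      intro i
      have h1 := hproj (xs i) (subset_convexHull _ _ ⟨i, rfl⟩)
      have h2 : ‖x - xs i‖ ^ 2
          = ‖x - z‖ ^ 2 + 2 * (inner ℝ (x - z) (z - xs i) : ℝ) + ‖z - xs i‖ ^ 2 := by
        have e : x - xs i = (x - z) + (z - xs i) := by abel
        rw [e, norm_add_sq_real]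
      have h3 : (0:ℝ) ≤ inner ℝ (x - z) (z - xs i) := by
        have e : (inner ℝ (x - z) (z - xs i) : ℝ) = -(inner ℝ (x - z) (xs i - z) : ℝ) := by
          rw [← inner_neg_right]; congr 1; abel
        rw [e]; linarith
      have h4 : ‖z - xs i‖ ^ 2 < ‖x - xs i‖ ^ 2 := by nlinarith
      exact lt_of_pow_lt_pow_left₀ 2 (norm_nonneg _) h4
    obtain ⟨i0, hi0⟩ : ∃ i, 0 < l i := by
      by_contra h
      push_neg at h
      have : ∑ i, l i = 0 :=
        Finset.sum_eq_zero fun i _ => le_antisymm (h i) (hl0 i)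
      rw [hl1] at this
      exact one_ne_zero this
    have hlt2 : ∑ i, l i * ‖z - xs i‖ < ∑ i, l i * ‖x - xs i‖ := by
      apply Finset.sum_lt_sum
      · exact fun i _ => mul_le_mul_of_nonneg_left (hlt i).le (hl0 i)
      · exact ⟨i0, Finset.mem_univ _, mul_lt_mul_of_pos_left (hlt i0) hi0⟩
    exact absurd (hx z) (not_le.2 hlt2)
end

section
/- Let X = ℝ^d with the Euclidean distance, μ ∈ 𝒫₁(ℝ^d), λ ∈ Δ_N, and x₁,…,x_N ∈ ℝ^d. For x ∈ ℝ^d, let τ_x#μ denote the pushforward of μ by the translation y ↦ y + x. If x ∈ M_λ(x₁,…,x_N), i.e. x minimizes y ↦ ∑ᵢ λᵢ |y − xᵢ|, then τ_x#μ ∈ Med_λ(τ_{x₁}#μ,…,τ_{x_N}#μ), i.e. ∑ᵢ λᵢ W₁(τ_{xᵢ}#μ, τ_x#μ) ≤ ∑ᵢ λᵢ W₁(τ_{xᵢ}#μ, ν) for every ν ∈ 𝒫₁(ℝ^d). -/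
open MeasureTheory Filter Topology
open scoped ENNReal NNReal

section Aux

variable {d : ℕ}
local notation "E" => EuclideanSpace ℝ (Fin d)

lemma aux_integrable_id {ν : Measure E} (hν : ν ∈ P1 (EuclideanSpace ℝ (Fin d))) :
    Integrable (fun z : E => z) ν := by
  have h := hν.2 0
  simp only [dist_zero_left] at h
  exact ⟨aestronglyMeasurable_id, by simpa [HasFiniteIntegral] using h.hasFiniteIntegral⟩

lemma aux_lint_lt_top {ν : Measure E} (hν : ν ∈ P1 (EuclideanSpace ℝ (Fin d))) :
    ∫⁻ z, (‖z‖₊ : ℝ≥0∞) ∂ν < ∞ := by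
  have h := (aux_integrable_id hν).hasFiniteIntegral
  simpa [HasFiniteIntegral, enorm_eq_nnnorm] using h

/-- Upper bound: translating couples. -/
lemma aux_W1_translate_le {μ : Measure E} (hμ : μ ∈ P1 (EuclideanSpace ℝ (Fin d)))
    (a b : E) :
    W1 (μ.map (fun y => y + a)) (μ.map (fun y => y + b)) ≤ dist a b := by
  haveI : IsProbabilityMeasure μ := hμ.1
  have hma : Measurable fun y : E => y + a := measurable_id.add_const a
  have hmb : Measurable fun y : E => y + b := measurable_id.add_const b
  have hm : Measurable fun y : E => ((y + a, y + b) : E × E) := hma.prodMk hmb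
  set γ : Measure (E × E) := μ.map (fun y => (y + a, y + b)) with hγdef
  have hγ : γ ∈ Couplings (μ.map (fun y => y + a)) (μ.map (fun y => y + b)) := by
    refine ⟨Measure.isProbabilityMeasure_map hm.aemeasurable, ?_, ?_⟩
    · rw [hγdef, Measure.map_map measurable_fst hm]; rfl
    · rw [hγdef, Measure.map_map measurable_snd hm]; rfl
  have hcost : ∫⁻ p, edist p.1 p.2 ∂γ = edist a b := by
    rw [hγdef, lintegral_map (measurable_fst.edist measurable_snd) hm]
    simp [edist_add_left]
  have hle : (⨅ γ ∈ Couplings (μ.map (fun y => y + a)) (μ.map (fun y => y + b)),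
      ∫⁻ p, edist p.1 p.2 ∂γ) ≤ edist a b := by
    refine le_trans (biInf_le _ hγ) (le_of_eq hcost)
  rw [W1, dist_edist]
  exact ENNReal.toReal_mono (edist_lt_top a b).ne hle

/-- Lower bound: distance of barycenters. -/
lemma aux_dist_bary_le {ν ρ : Measure E} (hν : ν ∈ P1 (EuclideanSpace ℝ (Fin d)))
    (hρ : ρ ∈ P1 (EuclideanSpace ℝ (Fin d))) :
    dist (∫ z, z ∂ν) (∫ z, z ∂ρ) ≤ W1 ν ρ := by
  haveI := hν.1; haveI := hρ.1
  set S := ⨅ γ ∈ Couplings ν ρ, ∫⁻ p, edist p.1 p.2 ∂γ with hS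
  have hprod : ν.prod ρ ∈ Couplings ν ρ := by
    refine ⟨by infer_instance, ?_, ?_⟩ <;> simp [Measure.map_fst_prod, Measure.map_snd_prod]
  have hSfin : S < ∞ := by
    have hcost : ∫⁻ p, edist p.1 p.2 ∂(ν.prod ρ)
        ≤ ∫⁻ z, (‖z‖₊ : ℝ≥0∞) ∂ν + ∫⁻ z, (‖z‖₊ : ℝ≥0∞) ∂ρ := by
      have h1 : ∫⁻ p : E × E, (‖p.1‖₊ : ℝ≥0∞) ∂(ν.prod ρ) = ∫⁻ z, (‖z‖₊ : ℝ≥0∞) ∂ν := by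
        rw [← lintegral_map measurable_nnnorm.coe_nnreal_ennreal measurable_fst,
          Measure.map_fst_prod]
        simp
      have h2 : ∫⁻ p : E × E, (‖p.2‖₊ : ℝ≥0∞) ∂(ν.prod ρ) = ∫⁻ z, (‖z‖₊ : ℝ≥0∞) ∂ρ := by
        rw [← lintegral_map measurable_nnnorm.coe_nnreal_ennreal measurable_snd,
          Measure.map_snd_prod]
        simp
      calc ∫⁻ p, edist p.1 p.2 ∂(ν.prod ρ)
          ≤ ∫⁻ p : E × E, ((‖p.1‖₊ : ℝ≥0∞) + ‖p.2‖₊) ∂(ν.prod ρ) := by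
            refine lintegral_mono fun p => ?_
            rw [edist_eq_enorm_sub]
            exact ENNReal.coe_le_coe.mpr (nnnorm_sub_le p.1 p.2)
        _ = ∫⁻ p : E × E, (‖p.1‖₊ : ℝ≥0∞) ∂(ν.prod ρ)
              + ∫⁻ p : E × E, (‖p.2‖₊ : ℝ≥0∞) ∂(ν.prod ρ) :=
            lintegral_add_left (measurable_nnnorm.coe_nnreal_ennreal.comp measurable_fst) _
        _ = _ := by rw [h1, h2]
    exact lt_of_le_of_lt (le_trans (biInf_le _ hprod) hcost)
      (ENNReal.add_lt_top.mpr ⟨aux_lint_lt_top hν, aux_lint_lt_top hρ⟩)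
  have hlow : ENNReal.ofReal (dist (∫ z, z ∂ν) (∫ z, z ∂ρ)) ≤ S := by
    refine le_iInf₂ fun γ hγ => ?_
    obtain ⟨hγp, hγ1, hγ2⟩ := hγ
    rcases eq_or_ne (∫⁻ p, edist p.1 p.2 ∂γ) ∞ with h | h
    · exact h ▸ le_top
    haveI := hγp
    have h1 : Integrable (fun p : E × E => p.1) γ := by
      have := (integrable_map_measure aestronglyMeasurable_id
        measurable_fst.aemeasurable).mp (hγ1 ▸ aux_integrable_id hν)
      simpa using this
    have h2 : Integrable (fun p : E × E => p.2) γ := by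
      have := (integrable_map_measure aestronglyMeasurable_id
        measurable_snd.aemeasurable).mp (hγ2 ▸ aux_integrable_id hρ)
      simpa using this
    have hnorm : ‖∫ p, (p.1 - p.2) ∂γ‖ ≤ (∫⁻ p, edist p.1 p.2 ∂γ).toReal := by
      refine le_trans (norm_integral_le_lintegral_norm _) (le_of_eq ?_)
      congr 1
      refine lintegral_congr fun p => ?_
      rw [edist_eq_enorm_sub, ← ofReal_norm]
    have hint : ∫ p, (p.1 - p.2) ∂γ = (∫ z, z ∂ν) - ∫ z, z ∂ρ := by
      rw [integral_sub h1 h2]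
      congr 1
      · rw [← hγ1]
        exact (integral_map measurable_fst.aemeasurable aestronglyMeasurable_id).symm
      · rw [← hγ2]
        exact (integral_map measurable_snd.aemeasurable aestronglyMeasurable_id).symm
    refine ENNReal.ofReal_le_of_le_toReal ?_
    rw [dist_eq_norm, ← hint]
    exact hnorm
  have := ENNReal.toReal_mono hSfin.ne hlow
  rwa [ENNReal.toReal_ofReal dist_nonneg] at this

lemma aux_P1_translate {μ : Measure E} (hμ : μ ∈ P1 (EuclideanSpace ℝ (Fin d)))
    (a : E) : μ.map (fun y => y + a) ∈ P1 (EuclideanSpace ℝ (Fin d)) := by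
  haveI := hμ.1
  have hma : Measurable fun y : E => y + a := measurable_id.add_const a
  refine ⟨Measure.isProbabilityMeasure_map hma.aemeasurable, fun x₀ => ?_⟩
  rw [integrable_map_measure (Measurable.aestronglyMeasurable (by fun_prop))
    hma.aemeasurable]
  have : (fun y : E => dist x₀ (y + a)) = fun y : E => dist (x₀ - a) y := by
    funext y
    rw [dist_eq_norm, dist_eq_norm]
    congr 1
    abel
  show Integrable (fun y : E => dist x₀ (y + a)) μ
  exact this ▸ hμ.2 (x₀ - a)

lemma aux_bary_translate {μ : Measure E} (hμ : μ ∈ P1 (EuclideanSpace ℝ (Fin d)))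
    (a : E) : ∫ z, z ∂(μ.map (fun y => y + a)) = (∫ z, z ∂μ) + a := by
  haveI := hμ.1
  have hma : Measurable fun y : E => y + a := measurable_id.add_const a
  rw [show (∫ z, z ∂Measure.map (fun y => y + a) μ) = ∫ y, y + a ∂μ from
    integral_map hma.aemeasurable aestronglyMeasurable_id]
  rw [integral_add (aux_integrable_id hμ) (integrable_const a), integral_const]
  simp

end Aux

/-- Medians of translated measures: if `x` is a weighted geometric
median of `(x₁,…,x_N)` in Euclidean `ℝ^d`, then the translate `τ_x#μ` is a Wasserstein
median of the translates `(τ_{x₁}#μ, …, τ_{x_N}#μ)`. -/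
theorem median_of_translates
    {d N : ℕ} (hN : 1 ≤ N) {l : Fin N → ℝ} (hl : memSimplex l)
    {μ : Measure (EuclideanSpace ℝ (Fin d))} (hμ : μ ∈ P1 (EuclideanSpace ℝ (Fin d)))
    (xs : Fin N → EuclideanSpace ℝ (Fin d)) (x : EuclideanSpace ℝ (Fin d))
    (hx : ∀ y : EuclideanSpace ℝ (Fin d),
      ∑ i, l i * ‖x - xs i‖ ≤ ∑ i, l i * ‖y - xs i‖) :
    μ.map (fun y => y + x) ∈ Med l (fun i => μ.map (fun y => y + xs i)) := by
  refine ⟨aux_P1_translate hμ x, fun ρ hρ => ?_⟩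
  have key : ∀ i, ‖((∫ z, z ∂ρ) - ∫ z, z ∂μ) - xs i‖
      ≤ W1 (μ.map (fun z => z + xs i)) ρ := by
    intro i
    have hb := aux_dist_bary_le (aux_P1_translate hμ (xs i)) hρ
    rw [aux_bary_translate hμ (xs i), dist_eq_norm] at hb
    refine le_trans (le_of_eq ?_) hb
    rw [← norm_neg]
    congr 1
    abel
  simp only [medCost]
  calc ∑ i, l i * W1 (μ.map (fun y => y + xs i)) (μ.map (fun y => y + x))
      ≤ ∑ i, l i * ‖x - xs i‖ := by
        refine Finset.sum_le_sum fun i _ => mul_le_mul_of_nonneg_left ?_ (hl.1 i)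
        have := aux_W1_translate_le hμ (xs i) x
        rwa [dist_eq_norm', ] at this
    _ ≤ ∑ i, l i * ‖((∫ z, z ∂ρ) - ∫ z, z ∂μ) - xs i‖ := hx _
    _ ≤ ∑ i, l i * W1 (μ.map (fun y => y + xs i)) ρ :=
        Finset.sum_le_sum fun i _ => mul_le_mul_of_nonneg_left (key i) (hl.1 i)
end
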